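/- arXiv:2102.07707 — 3 statements merged into one kernel-verified Lean document; each statement's English description precedes it below -/
import Mathlib

section
/- Let H be a Hilbert space, H₁ and H₂ Hilbert spaces, and U : H → H₁ ⊗ H₂ a unitary. Let M, N be von Neumann algebras on H with N ⊆ M', and suppose U M U* = B(H₁) ⊗ 1 and M ∨ N = B(H). Then U N U* = 1 ⊗ B(H₂), and consequently M = N'. -/
variable {H K : Type*}
  [NormedAddCommGroup H] [InnerProductSpace ℂ H] [CompleteSpace H]
  [NormedAddCommGroup K] [InnerProductSpace ℂ K] [CompleteSpace K]

/-- Conjugation of an operator `T` on `H` by a unitary `U : H → K`, i.e. `U T U*`. -/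
noncomputable def unitaryConj (U : H ≃ₗᵢ[ℂ] K) (T : H →L[ℂ] H) : K →L[ℂ] K :=
  (U.toContinuousLinearEquiv.toContinuousLinearMap).comp
    (T.comp U.symm.toContinuousLinearEquiv.toContinuousLinearMap)

/-!
Conjugating by `U`, put `A = U M U* = B(H₁) ⊗ 1` and `P = U N U*` on `ℓ²(ι, H₁) = H₁ ⊗ ℓ²(ι)`.
Then `P ⊆ A' = 1 ⊗ B(ℓ²(ι))`, and `A ∪ P` has trivial commutant because `M ∪ N` does.
The heart of the matter is `P' ⊆ A`. For `S ∈ P'` and `u, v ∈ H₁` the slice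
`Y = (⟪u, ·⟫ ⊗ 1) S (v ⊗ 1)` commutes with every `Z` such that `1 ⊗ Z ∈ P`, so `1 ⊗ Y`
commutes with `A ∪ P` and is scalar; an operator all of whose slices are scalars lies in `A`.
Hence `P' = A`, so `P = P'' = A' = 1 ⊗ B(ℓ²(ι))` and `M = N'`.
The operator `1 ⊗ Y` is built from a Hilbert basis of `H₁` indexed by `κ`, through
`ℓ²(ι, H₁) ≅ ℓ²(ι, ℓ²(κ)) ≅ ℓ²(κ, ℓ²(ι))`.
-/

theorem MulEquivClass.image_centralizer {F M N : Type*} [Mul M] [Mul N] [EquivLike F M N]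
    [MulEquivClass F M N] (e : F) (s : Set M) :
    e '' s.centralizer = (e '' s).centralizer := by
  ext y
  obtain ⟨x, rfl⟩ := EquivLike.surjective e y
  simp only [(EquivLike.injective e).mem_set_image, Set.mem_centralizer_iff,
    Set.forall_mem_image, ← map_mul, (EquivLike.injective e).eq_iff]

theorem unitaryConj_eq_conjStarAlgEquiv (U : H ≃ₗᵢ[ℂ] K) :
    unitaryConj U = U.conjStarAlgEquiv := rfl

section

open ContinuousLinearMap
open scoped lp InnerProductSpace

namespace lp

section

variable {ι : Type*} {E : ι → Type*} [∀ i, NormedAddCommGroup (E i)]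

theorem hasSum_norm_sq (f : lp E 2) : HasSum (fun i => ‖f i‖ ^ 2) (‖f‖ ^ 2) := by
  simpa using lp.hasSum_norm (p := 2) (by norm_num) f

theorem sum_norm_sq_le (f : lp E 2) (s : Finset ι) : ∑ i ∈ s, ‖f i‖ ^ 2 ≤ ‖f‖ ^ 2 := by
  simpa using lp.sum_rpow_le_norm_rpow (p := 2) (by norm_num) f s

variable {𝕜 : Type*} [NontriviallyNormedField 𝕜] [∀ i, NormedSpace 𝕜 (E i)]

noncomputable def mkCLM {F : Type*} [NormedAddCommGroup F] [NormedSpace 𝕜 F]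
    (φ : ∀ i, F →L[𝕜] E i) (C : ℝ) (hC : 0 ≤ C)
    (hφ : ∀ f (s : Finset ι), ∑ i ∈ s, ‖φ i f‖ ^ 2 ≤ (C * ‖f‖) ^ 2) : F →L[𝕜] lp E 2 :=
  LinearMap.mkContinuous
    { toFun := fun f => ⟨fun i => φ i f, memℓp_gen' (C := (C * ‖f‖) ^ 2) (by simpa using hφ f)⟩
      map_add' := fun f g => by ext i; exact (φ i).map_add f g
      map_smul' := fun c f => by ext i; simp }
    C fun f => norm_le_of_forall_sum_le (p := 2) (by norm_num) (by positivity) (by simpa using hφ f)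

theorem continuousLinearMap_ext_single [DecidableEq ι] {p : ENNReal} [Fact (1 ≤ p)] (hp : p ≠ ⊤)
    {W : Type*} [NormedAddCommGroup W] [NormedSpace 𝕜 W] {F G : lp E p →L[𝕜] W}
    (h : ∀ i v, F (lp.single p i v) = G (lp.single p i v)) : F = G := by
  ext f
  exact ((lp.hasSum_single hp f).mapL F).unique
    (by simpa only [h] using (lp.hasSum_single hp f).mapL G)

end

variable {𝕜 : Type*} [NontriviallyNormedField 𝕜] {ι κ : Type*}
  {E F : Type*} [NormedAddCommGroup E] [NormedSpace 𝕜 E] [NormedAddCommGroup F] [NormedSpace 𝕜 F]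

noncomputable def ampliation (T : E →L[𝕜] F) : ℓ²(ι, E) →L[𝕜] ℓ²(ι, F) :=
  mkCLM (fun i => T ∘L evalCLM 𝕜 _ 2 i) ‖T‖ (norm_nonneg T) fun f s =>
    calc ∑ i ∈ s, ‖T (f i)‖ ^ 2 ≤ ∑ i ∈ s, ‖T‖ ^ 2 * ‖f i‖ ^ 2 := by
          gcongr with i
          rw [← mul_pow]
          gcongr
          exact T.le_opNorm _
      _ ≤ ‖T‖ ^ 2 * ‖f‖ ^ 2 := by
          rw [← Finset.mul_sum]
          gcongr
          exact sum_norm_sq_le f s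
      _ = (‖T‖ * ‖f‖) ^ 2 := (mul_pow _ _ _).symm

@[simp] theorem ampliation_apply (T : E →L[𝕜] F) (f : ℓ²(ι, E)) (i : ι) :
    ampliation T f i = T (f i) := rfl

theorem ampliation_single [DecidableEq ι] (T : E →L[𝕜] F) (j : ι) (v : E) :
    ampliation T (lp.single 2 j v) = lp.single 2 j (T v) := by
  ext i
  by_cases h : i = j <;> simp [lp.single_apply, h]

theorem evalCLM_apply (a : κ) (f : ℓ²(κ, E)) : evalCLM 𝕜 _ 2 a f = f a := rfl

variable (𝕜) in
noncomputable def transpose : ℓ²(ι, ℓ²(κ, E)) →L[𝕜] ℓ²(κ, ℓ²(ι, E)) :=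
  mkCLM (fun a => ampliation (evalCLM 𝕜 (fun _ : κ => E) 2 a)) 1 zero_le_one fun f s => by
    have hcol (a : κ) : HasSum (fun i => ‖f i a‖ ^ 2)
        (‖ampliation (evalCLM 𝕜 (fun _ : κ => E) 2 a) f‖ ^ 2) := by
      simpa only [ampliation_apply, evalCLM_apply] using
        hasSum_norm_sq (ampliation (evalCLM 𝕜 _ 2 a) f)
    calc ∑ a ∈ s, ‖ampliation (evalCLM 𝕜 (fun _ : κ => E) 2 a) f‖ ^ 2
        = ∑' i, ∑ a ∈ s, ‖f i a‖ ^ 2 := by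
          rw [Summable.tsum_finsetSum fun a _ => (hcol a).summable]
          exact Finset.sum_congr rfl fun a _ => (hcol a).tsum_eq.symm
      _ ≤ ∑' i, ‖f i‖ ^ 2 :=
          Summable.tsum_le_tsum (fun i => sum_norm_sq_le (f i) s)
            (summable_sum fun a _ => (hcol a).summable) (hasSum_norm_sq f).summable
      _ = (1 * ‖f‖) ^ 2 := by rw [one_mul, (hasSum_norm_sq f).tsum_eq]

@[simp] theorem transpose_apply (f : ℓ²(ι, ℓ²(κ, E))) (a : κ) (i : ι) :
    transpose 𝕜 f a i = f i a := rfl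

theorem ampliation_ampliation_toSpanSingleton (T : E →L[𝕜] F) (x : E) (y : ℓ²(ι, 𝕜)) :
    ampliation T (ampliation (toSpanSingleton 𝕜 x) y) =
      ampliation (toSpanSingleton 𝕜 (T x)) y := by
  ext i
  simp

theorem ampliation_toSpanSingleton_single_one [DecidableEq ι] (x : E) (j : ι) :
    ampliation (toSpanSingleton 𝕜 x) (lp.single 2 j 1) = lp.single 2 j x := by
  simp [ampliation_single]

theorem ampliation_toSpanSingleton_self (c : 𝕜) (y : ℓ²(ι, 𝕜)) :
    ampliation (toSpanSingleton 𝕜 c) y = c • y := by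
  ext i
  simp [mul_comm]

theorem transpose_ampliation_toSpanSingleton (w : ℓ²(κ, 𝕜)) (y : ℓ²(ι, 𝕜)) :
    transpose 𝕜 (ampliation (toSpanSingleton 𝕜 w) y) = ampliation (toSpanSingleton 𝕜 y) w := by
  ext a i
  simp [mul_comm]

end lp

open lp

variable {ι κ : Type*} {H₁ : Type*} [NormedAddCommGroup H₁] [InnerProductSpace ℂ H₁]

/-- `B(H₁) ⊗ 1` on `H₁ ⊗ ℓ²(ι) = ℓ²(ι, H₁)`. -/
def tensorOneSet (ι H₁ : Type*) [NormedAddCommGroup H₁] [InnerProductSpace ℂ H₁] :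
    Set (ℓ²(ι, H₁) →L[ℂ] ℓ²(ι, H₁)) :=
  {T | ∃ a : H₁ →L[ℂ] H₁, ∀ (f : ℓ²(ι, H₁)) (i : ι),
    (T f : ∀ _ : ι, H₁) i = a ((f : ∀ _ : ι, H₁) i)}

/-- `1 ⊗ B(ℓ²(ι))` on `H₁ ⊗ ℓ²(ι) = ℓ²(ι, H₁)`: the operators whose matrix entries are scalars. -/
def oneTensorSet (ι H₁ : Type*) [DecidableEq ι] [NormedAddCommGroup H₁]
    [InnerProductSpace ℂ H₁] : Set (ℓ²(ι, H₁) →L[ℂ] ℓ²(ι, H₁)) :=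
  {T | ∀ i j : ι, ∃ c : ℂ, ∀ v : H₁, (T (lp.single 2 j v) : ∀ _ : ι, H₁) i = c • v}

theorem tensorOneSet_eq_range : tensorOneSet ι H₁ = Set.range ampliation := by
  ext T
  refine ⟨fun ⟨a, ha⟩ => ⟨a, ?_⟩, fun ⟨a, ha⟩ => ⟨a, fun f i => by rw [← ha]; rfl⟩⟩
  ext f i
  exact (ha f i).symm

/-- The slice map `⟪u, ·⟫ ⊗ 1` applied to `T (v ⊗ 1)`: the operator on `ℓ²(ι)` with matrix
entries `⟪u, T_ij v⟫`. -/
noncomputable def slice (u v : H₁) (T : ℓ²(ι, H₁) →L[ℂ] ℓ²(ι, H₁)) :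
    ℓ²(ι, ℂ) →L[ℂ] ℓ²(ι, ℂ) :=
  ampliation (innerSL ℂ u) ∘L T ∘L ampliation (toSpanSingleton ℂ v)

theorem slice_apply_single_one [DecidableEq ι] (u v : H₁) (T : ℓ²(ι, H₁) →L[ℂ] ℓ²(ι, H₁))
    (i j : ι) : slice u v T (lp.single 2 j 1) i = ⟪u, T (lp.single 2 j v) i⟫_ℂ := by
  simp [slice, ampliation_toSpanSingleton_single_one]

theorem ampliation_innerSL_ampliation_toSpanSingleton (u v : H₁) (y : ℓ²(ι, ℂ)) :
    ampliation (innerSL ℂ u) (ampliation (toSpanSingleton ℂ v) y) = ⟪u, v⟫_ℂ • y := by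
  rw [ampliation_ampliation_toSpanSingleton, innerSL_apply_apply,
    ampliation_toSpanSingleton_self]

theorem slice_smul_one {v₀ : H₁} (hv₀ : ‖v₀‖ = 1) (c : ℂ) :
    slice v₀ v₀ (c • 1 : ℓ²(ι, H₁) →L[ℂ] ℓ²(ι, H₁)) = c • 1 := by
  ext1 y
  simp [slice, ampliation_innerSL_ampliation_toSpanSingleton, inner_self_eq_norm_sq_to_K, hv₀]

noncomputable def HilbertBasis.oneTensor (b : HilbertBasis κ ℂ H₁)
    (Y : ℓ²(ι, ℂ) →L[ℂ] ℓ²(ι, ℂ)) : ℓ²(ι, H₁) →L[ℂ] ℓ²(ι, H₁) :=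
  ampliation (b.repr.symm : ℓ²(κ, ℂ) →L[ℂ] H₁) ∘L transpose ℂ ∘L ampliation Y ∘L
    transpose ℂ ∘L ampliation (b.repr : H₁ →L[ℂ] ℓ²(κ, ℂ))

namespace HilbertBasis

variable (b : HilbertBasis κ ℂ H₁)

theorem oneTensor_ampliation_toSpanSingleton (Y : ℓ²(ι, ℂ) →L[ℂ] ℓ²(ι, ℂ)) (v : H₁)
    (y : ℓ²(ι, ℂ)) :
    b.oneTensor Y (ampliation (toSpanSingleton ℂ v) y) =
      ampliation (toSpanSingleton ℂ v) (Y y) := by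
  simp only [oneTensor, comp_apply, ampliation_ampliation_toSpanSingleton,
    transpose_ampliation_toSpanSingleton]
  simp

theorem slice_oneTensor {v₀ : H₁} (hv₀ : ‖v₀‖ = 1) (Y : ℓ²(ι, ℂ) →L[ℂ] ℓ²(ι, ℂ)) :
    slice v₀ v₀ (b.oneTensor Y) = Y := by
  ext1 y
  simp [slice, oneTensor_ampliation_toSpanSingleton,
    ampliation_innerSL_ampliation_toSpanSingleton, inner_self_eq_norm_sq_to_K, hv₀]

variable [DecidableEq ι]

theorem oneTensor_single (Y : ℓ²(ι, ℂ) →L[ℂ] ℓ²(ι, ℂ)) (j : ι) (v : H₁) :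
    b.oneTensor Y (lp.single 2 j v) =
      ampliation (toSpanSingleton ℂ v) (Y (lp.single 2 j 1)) := by
  rw [← ampliation_toSpanSingleton_single_one (𝕜 := ℂ), oneTensor_ampliation_toSpanSingleton]

theorem oneTensor_mem_oneTensorSet (Y : ℓ²(ι, ℂ) →L[ℂ] ℓ²(ι, ℂ)) :
    b.oneTensor Y ∈ oneTensorSet ι H₁ :=
  fun i j => ⟨Y (lp.single 2 j 1) i, fun v => by rw [oneTensor_single]; rfl⟩

theorem oneTensor_mul (Y Z : ℓ²(ι, ℂ) →L[ℂ] ℓ²(ι, ℂ)) :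
    b.oneTensor (Y * Z) = b.oneTensor Y * b.oneTensor Z :=
  continuousLinearMap_ext_single (by simp) fun j v => by
    simp only [mul_apply_eq_comp, oneTensor_single, oneTensor_ampliation_toSpanSingleton]

theorem ampliation_innerSL_oneTensor (Y : ℓ²(ι, ℂ) →L[ℂ] ℓ²(ι, ℂ)) (u : H₁) (f : ℓ²(ι, H₁)) :
    ampliation (innerSL ℂ u) (b.oneTensor Y f) = Y (ampliation (innerSL ℂ u) f) := by
  change (ampliation (innerSL ℂ u) ∘L b.oneTensor Y) f = (Y ∘L ampliation (innerSL ℂ u)) f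
  congr 1
  refine continuousLinearMap_ext_single (by simp) fun j v => ?_
  rw [comp_apply, comp_apply, oneTensor_single, ampliation_innerSL_ampliation_toSpanSingleton,
    ampliation_single, innerSL_apply_apply, ← map_smul, ← lp.single_smul, smul_eq_mul, mul_one]

theorem commute_slice_of_commute_oneTensor {Y : ℓ²(ι, ℂ) →L[ℂ] ℓ²(ι, ℂ)}
    {S : ℓ²(ι, H₁) →L[ℂ] ℓ²(ι, H₁)} (h : Commute (b.oneTensor Y) S) (u v : H₁) :
    Commute Y (slice u v S) := by
  refine ContinuousLinearMap.ext fun y => ?_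
  calc Y (slice u v S y)
      = ampliation (innerSL ℂ u) (b.oneTensor Y (S (ampliation (toSpanSingleton ℂ v) y))) :=
        (b.ampliation_innerSL_oneTensor Y u _).symm
    _ = ampliation (innerSL ℂ u) (S (b.oneTensor Y (ampliation (toSpanSingleton ℂ v) y))) := by
        rw [← mul_apply_eq_comp, h.eq, mul_apply_eq_comp]
    _ = slice u v S (Y y) := by
        rw [oneTensor_ampliation_toSpanSingleton]
        rfl

theorem eq_oneTensor_slice {v₀ : H₁} (hv₀ : ‖v₀‖ = 1) {T : ℓ²(ι, H₁) →L[ℂ] ℓ²(ι, H₁)}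
    (hT : T ∈ oneTensorSet ι H₁) : T = b.oneTensor (slice v₀ v₀ T) :=
  continuousLinearMap_ext_single (by simp) fun j v => by
    ext i
    obtain ⟨c, hc⟩ := hT i j
    rw [b.oneTensor_single, ampliation_apply, toSpanSingleton_apply, slice_apply_single_one, hc,
      hc, inner_smul_right, inner_self_eq_norm_sq_to_K, hv₀]
    simp

end HilbertBasis

variable [DecidableEq ι]

theorem centralizer_tensorOneSet : Set.centralizer (tensorOneSet ι H₁) = oneTensorSet ι H₁ := by
  ext T
  refine ⟨fun hT i j => ?_, fun hT => ?_⟩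
  · rcases subsingleton_or_nontrivial H₁ with _ | _
    · exact ⟨0, fun v => Subsingleton.elim _ _⟩
    obtain ⟨v₀, hv₀⟩ := exists_norm_eq H₁ zero_le_one
    refine ⟨⟪v₀, T (lp.single 2 j v₀) i⟫_ℂ, fun x => ?_⟩
    have h := congr($(hT (ampliation ((innerSL ℂ v₀).smulRight x))
      (by rw [tensorOneSet_eq_range]; exact ⟨_, rfl⟩)) (lp.single 2 j v₀) i)
    simpa [ampliation_single, inner_self_eq_norm_sq_to_K, hv₀] using h.symm
  · rw [tensorOneSet_eq_range]
    rintro _ ⟨a, rfl⟩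
    refine continuousLinearMap_ext_single (by simp) fun j v => ?_
    ext i
    obtain ⟨c, hc⟩ := hT i j
    simp [ampliation_single, hc]

theorem mem_tensorOneSet_of_forall_slice_eq_smul_one {S : ℓ²(ι, H₁) →L[ℂ] ℓ²(ι, H₁)}
    (hS : ∀ u v : H₁, ∃ c : ℂ, slice u v S = c • 1) : S ∈ tensorOneSet ι H₁ := by
  rcases isEmpty_or_nonempty ι with _ | ⟨⟨j₀⟩⟩
  · exact ⟨0, fun _ i => isEmptyElim i⟩
  choose c hc using hS
  have entry (u v : H₁) (i j : ι) :
      ⟪u, S (lp.single 2 j v) i⟫_ℂ = if i = j then c u v else 0 := by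
    rw [← slice_apply_single_one, hc]
    simp [Pi.single_apply]
  rw [tensorOneSet_eq_range]
  refine ⟨evalCLM ℂ _ 2 j₀ ∘L S ∘L singleContinuousLinearMap ℂ (fun _ : ι => H₁) 2 j₀,
    continuousLinearMap_ext_single (by simp) fun j v => ?_⟩
  ext i
  refine ext_inner_left ℂ fun u => ?_
  rw [ampliation_single, entry]
  by_cases h : i = j
  · subst h
    simp [evalCLM_apply, entry]
  · simp [h]

theorem centralizer_eq_tensorOneSet [CompleteSpace H₁] {P : Set (ℓ²(ι, H₁) →L[ℂ] ℓ²(ι, H₁))}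
    (hP : P ⊆ oneTensorSet ι H₁) (hAP : Set.centralizer (tensorOneSet ι H₁ ∪ P) ⊆ Set.center _) :
    Set.centralizer P = tensorOneSet ι H₁ := by
  have hPA : P ⊆ Set.centralizer (tensorOneSet ι H₁) := by rwa [centralizer_tensorOneSet]
  refine subset_antisymm (fun S hS => ?_)
    (Set.subset_centralizer_centralizer.trans (Set.centralizer_subset hPA))
  rcases subsingleton_or_nontrivial H₁ with _ | _
  · exact ⟨0, fun _ _ => Subsingleton.elim _ _⟩
  obtain ⟨v₀, hv₀⟩ := exists_norm_eq H₁ zero_le_one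
  obtain ⟨_, b, -⟩ := exists_hilbertBasis ℂ H₁
  refine mem_tensorOneSet_of_forall_slice_eq_smul_one fun u v => ?_
  have hW : b.oneTensor (slice u v S) ∈ Set.centralizer (tensorOneSet ι H₁ ∪ P) := by
    rw [Set.centralizer_union, centralizer_tensorOneSet]
    refine ⟨b.oneTensor_mem_oneTensorSet _, fun p hp => ?_⟩
    have hpS : Commute p S := hS p hp
    rw [b.eq_oneTensor_slice hv₀ (hP hp)] at hpS ⊢
    have h := congrArg b.oneTensor (b.commute_slice_of_commute_oneTensor hpS u v).eq
    rwa [b.oneTensor_mul, b.oneTensor_mul] at h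
  obtain ⟨c, hc⟩ := Algebra.mem_bot.mp (Algebra.IsCentral.out (K := ℂ) (hAP hW))
  refine ⟨c, ?_⟩
  rw [← b.slice_oneTensor hv₀ (slice u v S), ← hc, Algebra.algebraMap_eq_smul_one,
    slice_smul_one hv₀]

end

/-- Let `U : H → H₁ ⊗ H₂` be a unitary, and `M, N` von Neumann algebras on
`H` with `N ⊆ M'`, `U M U* = B(H₁) ⊗ 1` and `M ∨ N = B(H)` (expressed by saying that the
double commutant of `M ∪ N` is everything).  Then `U N U* = 1 ⊗ B(H₂)` and consequently
Haag duality `M = N'` holds.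

The Hilbert space tensor product `H₁ ⊗ H₂` is modeled as `lp (fun _ : ι => H₁) 2`
(with `ι` indexing an orthonormal basis of `H₂`); `B(H₁) ⊗ 1` is the algebra of
componentwise-acting operators and `1 ⊗ B(H₂)` is the set of operators whose matrix
entries over `ι` are scalars. -/
theorem haag_duality_of_spatial_typeI
    {H₁ : Type*} [NormedAddCommGroup H₁] [InnerProductSpace ℂ H₁] [CompleteSpace H₁]
    {ι : Type*} [DecidableEq ι]
    (U : H ≃ₗᵢ[ℂ] lp (fun _ : ι => H₁) 2)
    (M N : VonNeumannAlgebra H)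
    (hN : (N : Set (H →L[ℂ] H)) ⊆ (M.commutant : Set (H →L[ℂ] H)))
    (hM : unitaryConj U '' (M : Set (H →L[ℂ] H)) =
      {T : lp (fun _ : ι => H₁) 2 →L[ℂ] lp (fun _ : ι => H₁) 2 |
        ∃ a : H₁ →L[ℂ] H₁, ∀ (f : lp (fun _ : ι => H₁) 2) (i : ι),
          (T f : ∀ _ : ι, H₁) i = a ((f : ∀ _ : ι, H₁) i)})
    (hgen : Set.centralizer
        (Set.centralizer ((M : Set (H →L[ℂ] H)) ∪ (N : Set (H →L[ℂ] H)))) = Set.univ) :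
    unitaryConj U '' (N : Set (H →L[ℂ] H)) =
      {T : lp (fun _ : ι => H₁) 2 →L[ℂ] lp (fun _ : ι => H₁) 2 |
        ∀ i j : ι, ∃ c : ℂ, ∀ v : H₁, (T (lp.single 2 j v) : ∀ _ : ι, H₁) i = c • v} ∧
    (M : Set (H →L[ℂ] H)) = (N.commutant : Set (H →L[ℂ] H)) := by
  rw [unitaryConj_eq_conjStarAlgEquiv] at hM ⊢
  set e := U.conjStarAlgEquiv
  change e '' M = tensorOneSet ι H₁ at hM
  rw [VonNeumannAlgebra.coe_commutant] at hN ⊢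
  have hP : e '' N ⊆ oneTensorSet ι H₁ := by
    rw [← centralizer_tensorOneSet, ← hM, ← MulEquivClass.image_centralizer]
    exact Set.image_mono hN
  have hAP : Set.centralizer (tensorOneSet ι H₁ ∪ e '' N) = Set.center _ := by
    rw [← hM, ← Set.image_union, ← MulEquivClass.image_centralizer,
      ← Set.centralizer_centralizer_centralizer, hgen, MulEquivClass.image_centralizer,
      Set.image_univ_of_surjective (EquivLike.surjective e), Set.centralizer_univ]
  have hN' : Set.centralizer (e '' N) = tensorOneSet ι H₁ :=
    centralizer_eq_tensorOneSet hP hAP.subset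
  refine ⟨?_, Set.image_injective.mpr (EquivLike.injective e) ?_⟩
  · rw [← N.centralizer_centralizer, MulEquivClass.image_centralizer,
      MulEquivClass.image_centralizer, hN', centralizer_tensorOneSet]
    rfl
  · rw [MulEquivClass.image_centralizer, hN', hM]
end

section
/- The commutant of the von Neumann algebra B(H₁) ⊗ 1 acting on the Hilbert space tensor product H₁ ⊗ H₂ equals 1 ⊗ B(H₂). -/
open scoped ComplexInnerProductSpace ENNReal

section Aux

variable {H₁ : Type*} [NormedAddCommGroup H₁] [InnerProductSpace ℂ H₁] [CompleteSpace H₁]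
variable {ι : Type*} [DecidableEq ι]

private theorem memℓp_comp (a : H₁ →L[ℂ] H₁) (f : lp (fun _ : ι => H₁) 2) :
    Memℓp (fun i => a ((f : ∀ _ : ι, H₁) i)) 2 := by
  apply memℓp_gen
  have hs : Summable (fun i : ι => ‖a‖ ^ (2 : ℝ≥0∞).toReal *
      ‖(f : ∀ _ : ι, H₁) i‖ ^ (2 : ℝ≥0∞).toReal) :=
    ((lp.memℓp f).summable (by norm_num)).mul_left _
  refine hs.of_nonneg_of_le (fun i => Real.rpow_nonneg (norm_nonneg _) _) (fun i => ?_)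
  calc ‖a ((f : ∀ _ : ι, H₁) i)‖ ^ (2 : ℝ≥0∞).toReal
      ≤ (‖a‖ * ‖(f : ∀ _ : ι, H₁) i‖) ^ (2 : ℝ≥0∞).toReal :=
        Real.rpow_le_rpow (norm_nonneg _) (a.le_opNorm _) (by norm_num)
    _ = _ := Real.mul_rpow (norm_nonneg _) (norm_nonneg _)

/-- The ampliation `a ⊗ 1`. -/
noncomputable def ampl (a : H₁ →L[ℂ] H₁) :
    lp (fun _ : ι => H₁) 2 →L[ℂ] lp (fun _ : ι => H₁) 2 :=
  LinearMap.mkContinuous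
    { toFun := fun f => ⟨fun i => a ((f : ∀ _ : ι, H₁) i), memℓp_comp a f⟩
      map_add' := fun f g => by
        apply lp.ext
        funext i
        show a ((f + g : lp _ 2) i) = a (f i) + a (g i)
        rw [lp.coeFn_add]
        simp
      map_smul' := fun c f => by
        apply lp.ext
        funext i
        show a ((c • f : lp _ 2) i) = c • a (f i)
        rw [lp.coeFn_smul]
        simp }
    ‖a‖ (by
      intro f
      set g : lp (fun _ : ι => H₁) 2 := ⟨fun i => a ((f : ∀ _ : ι, H₁) i), memℓp_comp a f⟩
      have ht : (0 : ℝ) < (2 : ℝ≥0∞).toReal := by norm_num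
      have hab : (0 : ℝ) ≤ ‖a‖ * ‖f‖ := mul_nonneg (norm_nonneg _) (norm_nonneg _)
      show ‖g‖ ≤ ‖a‖ * ‖f‖
      rw [← Real.rpow_le_rpow_iff (lp.norm_nonneg' g) hab ht]
      rw [lp.norm_rpow_eq_tsum ht g, Real.mul_rpow (norm_nonneg _) (norm_nonneg _),
        lp.norm_rpow_eq_tsum ht f, ← tsum_mul_left]
      refine Summable.tsum_le_tsum (fun i => ?_) ((lp.memℓp g).summable ht)
        (((lp.memℓp f).summable ht).mul_left _)
      calc ‖(g : ∀ _ : ι, H₁) i‖ ^ (2 : ℝ≥0∞).toReal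
          = ‖a ((f : ∀ _ : ι, H₁) i)‖ ^ (2 : ℝ≥0∞).toReal := rfl
        _ ≤ (‖a‖ * ‖(f : ∀ _ : ι, H₁) i‖) ^ (2 : ℝ≥0∞).toReal :=
            Real.rpow_le_rpow (norm_nonneg _) (a.le_opNorm _) (by norm_num)
        _ = _ := Real.mul_rpow (norm_nonneg _) (norm_nonneg _))

theorem ampl_apply (a : H₁ →L[ℂ] H₁) (f : lp (fun _ : ι => H₁) 2) (i : ι) :
    ((ampl a f : lp (fun _ : ι => H₁) 2) : ∀ _ : ι, H₁) i = a ((f : ∀ _ : ι, H₁) i) := rfl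

theorem ampl_single (a : H₁ →L[ℂ] H₁) (j : ι) (v : H₁) :
    ampl a (lp.single 2 j v) = lp.single 2 j (a v) := by
  apply lp.ext
  funext k
  show a ((lp.single 2 j v : ∀ _ : ι, H₁) k) = _
  by_cases h : k = j
  · subst h
    rw [lp.single_apply_self, lp.single_apply_self]
  · rw [lp.single_apply_ne _ _ _ h, lp.single_apply_ne _ _ _ h, map_zero]


/-- Evaluation at a coordinate as a continuous linear map. -/
noncomputable def evalCLM (i : ι) : lp (fun _ : ι => H₁) 2 →L[ℂ] H₁ :=
  LinearMap.mkContinuous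
    { toFun := fun f => (f : ∀ _ : ι, H₁) i
      map_add' := fun f g => by
        show ((f + g : lp (fun _ : ι => H₁) 2) : ∀ _ : ι, H₁) i = _
        rw [lp.coeFn_add]; rfl
      map_smul' := fun c f => by
        show ((c • f : lp (fun _ : ι => H₁) 2) : ∀ _ : ι, H₁) i = _
        rw [lp.coeFn_smul]; rfl }
    1 (fun f => by simpa using lp.norm_apply_le_norm two_ne_zero f i)

theorem evalCLM_apply (i : ι) (f : lp (fun _ : ι => H₁) 2) :
    evalCLM i f = (f : ∀ _ : ι, H₁) i := rfl

end Aux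

/-- The commutant of the von Neumann algebra `B(H₁) ⊗ 1` acting on the
Hilbert space tensor product `H₁ ⊗ H₂` equals `1 ⊗ B(H₂)`.

We model the Hilbert space tensor product `H₁ ⊗ H₂` concretely as
`lp (fun _ : ι => H₁) 2`, where `ι` is an index set for an orthonormal basis of `H₂`
(so that `H₂ ≅ ℓ²(ι)`).  The algebra `B(H₁) ⊗ 1` is the set of operators acting
componentwise by a fixed `a ∈ B(H₁)`, and `1 ⊗ B(H₂)` is the set of operators all of
whose matrix entries (with respect to the decomposition over `ι`) are scalar multiples
of the identity of `H₁`. -/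
theorem commutant_ampliation_eq
    {H₁ : Type*} [NormedAddCommGroup H₁] [InnerProductSpace ℂ H₁] [CompleteSpace H₁]
    {ι : Type*} [DecidableEq ι] :
    Set.centralizer
        {T : lp (fun _ : ι => H₁) 2 →L[ℂ] lp (fun _ : ι => H₁) 2 |
          ∃ a : H₁ →L[ℂ] H₁, ∀ (f : lp (fun _ : ι => H₁) 2) (i : ι), (T f : ∀ _ : ι, H₁) i = a ((f : ∀ _ : ι, H₁) i)} =
      {T : lp (fun _ : ι => H₁) 2 →L[ℂ] lp (fun _ : ι => H₁) 2 |
        ∀ i j : ι, ∃ c : ℂ, ∀ v : H₁, (T (lp.single 2 j v) : ∀ _ : ι, H₁) i = c • v} := by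
  ext T
  simp only [Set.mem_centralizer_iff, Set.mem_setOf_eq]
  constructor
  · intro hT i j
    have key : ∀ (a : H₁ →L[ℂ] H₁) (v : H₁),
        a ((T (lp.single 2 j v) : ∀ _ : ι, H₁) i)
          = (T (lp.single 2 j (a v)) : ∀ _ : ι, H₁) i := by
      intro a v
      have h := hT (ampl a) ⟨a, fun f i => rfl⟩
      have h2 := congrArg (fun S : lp (fun _ : ι => H₁) 2 →L[ℂ] lp (fun _ : ι => H₁) 2 =>
        ((S (lp.single 2 j v) : lp (fun _ : ι => H₁) 2) : ∀ _ : ι, H₁) i) h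
      simp only [ContinuousLinearMap.mul_apply] at h2
      rw [ampl_single] at h2
      exact h2
    by_cases hH : ∃ u : H₁, u ≠ 0
    · obtain ⟨u, hu⟩ := hH
      have huu : (⟪u, u⟫ : ℂ) ≠ 0 := inner_self_ne_zero.2 hu
      refine ⟨(⟪u, u⟫ : ℂ)⁻¹ * ⟪u, (T (lp.single 2 j u) : ∀ _ : ι, H₁) i⟫, fun v => ?_⟩
      have hk := key ((innerSL ℂ u).smulRight v) u
      have hl : (T (lp.single 2 j ((⟪u, u⟫ : ℂ) • v)) : ∀ _ : ι, H₁) i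
          = (⟪u, u⟫ : ℂ) • (T (lp.single 2 j v) : ∀ _ : ι, H₁) i := by
        rw [lp.single_smul, map_smul, lp.coeFn_smul, Pi.smul_apply]
      simp only [ContinuousLinearMap.smulRight_apply, innerSL_apply_apply] at hk
      rw [hl] at hk
      rw [mul_smul, hk, inv_smul_smul₀ huu]
    · push_neg at hH
      refine ⟨0, fun v => ?_⟩
      rw [hH ((T (lp.single 2 j v) : ∀ _ : ι, H₁) i), zero_smul]
  · intro hT S hS
    obtain ⟨a, ha⟩ := hS
    choose c hc using hT
    refine ContinuousLinearMap.ext fun f => lp.ext (funext fun i => ?_)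
    show ((S (T f) : lp (fun _ : ι => H₁) 2) : ∀ _ : ι, H₁) i
        = ((T (S f) : lp (fun _ : ι => H₁) 2) : ∀ _ : ι, H₁) i
    have hTf : ∀ g : lp (fun _ : ι => H₁) 2,
        HasSum (fun j : ι => c i j • ((g : ∀ _ : ι, H₁) j)) ((T g : ∀ _ : ι, H₁) i) := by
      intro g
      have h1 : HasSum (fun j : ι => lp.single 2 j ((g : ∀ _ : ι, H₁) j)) g :=
        lp.hasSum_single (by norm_num) g
      have h2 := (h1.mapL T).mapL (evalCLM i)
      have hrw : ∀ j : ι, evalCLM i (T (lp.single 2 j ((g : ∀ _ : ι, H₁) j)))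
          = c i j • ((g : ∀ _ : ι, H₁) j) := fun j => hc i j _
      simpa only [hrw, evalCLM_apply] using h2
    have hA : HasSum (fun j : ι => c i j • a ((f : ∀ _ : ι, H₁) j))
        (a ((T f : ∀ _ : ι, H₁) i)) := by
      have := (hTf f).mapL a
      simpa only [map_smul] using this
    have hB : HasSum (fun j : ι => c i j • a ((f : ∀ _ : ι, H₁) j))
        ((T (S f) : ∀ _ : ι, H₁) i) := by
      have := hTf (S f)
      simpa only [ha f] using this
    rw [ha (T f) i]
    exact hA.unique hB
end

section
/- Let Γ₀ ⊆ Γ₁ ⊆ Γ₂ ⊆ Γ₃ ⊆ Γ be subsets, let A = ⊗_{x∈Γ} A_x be a quasi-local C*-algebra, and let ω be a pure state on A whose GNS representation π admits a Type I factor F with π(A_{Γ₁})'' ⊆ F ⊆ π(A_{Γ₂})''. Suppose α = Ad(u) ∘ (α_{Γ₂ᶜ} ⊗ α_{Γ₂∖Γ₁} ⊗ α_{Γ₁}) ∘ β̃, where u ∈ A is unitary, α_X are automorphisms of A_X for the indicated regions, and β̃ = β_{Γ₃∖Γ₀} ⊗ id acts nontrivially only on A_{Γ₃∖Γ₀}.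 Then π(u) F π(u)* is a Type I factor F̃ with (π∘α)(A_{Γ₀})'' ⊆ F̃ ⊆ (π∘α)(A_{Γ₃})''; i.e. ω∘α is split for Γ₀ ⊆ Γ₃. -/
variable {A : Type*} [NormedRing A] [StarRing A] [CStarRing A] [CompleteSpace A]
  [NormedAlgebra ℂ A] [StarModule ℂ A]

/-- A state on a unital C*-algebra: a normalized positive linear functional. -/
def IsState (ω : A →ₗ[ℂ] ℂ) : Prop :=
  ω 1 = 1 ∧ ∀ a : A, 0 ≤ (ω (star a * a)).re ∧ (ω (star a * a)).im = 0

/-- A pure state: an extreme point of the state space. -/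
def IsPureState (ω : A →ₗ[ℂ] ℂ) : Prop :=
  IsState ω ∧ ∀ φ₁ φ₂ : A →ₗ[ℂ] ℂ, IsState φ₁ → IsState φ₂ → ∀ t : ℝ, 0 < t → t < 1 →
    (∀ a : A, ω a = (t : ℂ) * φ₁ a + ((1 - t : ℝ) : ℂ) * φ₂ a) → φ₁ = ω ∧ φ₂ = ω

/-- A set of bounded operators is a Type I factor if it has trivial center and contains a
minimal projection. -/
def IsTypeIFactorSet {H : Type*} [NormedAddCommGroup H] [InnerProductSpace ℂ H]
    [CompleteSpace H] (S : Set (H →L[ℂ] H)) : Prop :=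
  (S ∩ Set.centralizer S = {T : H →L[ℂ] H | ∃ c : ℂ, T = c • 1}) ∧
  ∃ p ∈ S, IsSelfAdjoint p ∧ IsIdempotentElem p ∧ p ≠ 0 ∧
    ∀ q ∈ S, IsSelfAdjoint q → IsIdempotentElem q → q * p = q → q = 0 ∨ q = p

section ConjAux

variable {M : Type*} [Monoid M] {U V : M}

private lemma conj_centralizer_aux (h1 : U * V = 1) (h2 : V * U = 1) (S : Set M) :
    Set.centralizer ((fun T => U * T * V) '' S) = (fun T => U * T * V) '' Set.centralizer S := by
  have hUV : ∀ x : M, U * (V * x) = x := fun x => by rw [← mul_assoc, h1, one_mul]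
  have hVU : ∀ x : M, V * (U * x) = x := fun x => by rw [← mul_assoc, h2, one_mul]
  ext T
  simp only [Set.mem_centralizer_iff, Set.mem_image]
  constructor
  · intro h
    refine ⟨V * T * U, fun m hm => ?_, by
      simp only [mul_assoc, hUV, hVU, h1, h2, mul_one, one_mul]⟩
    have h' := h (U * m * V) ⟨m, hm, rfl⟩
    have h'' := congrArg (fun x => V * x * U) h'
    simp only [mul_assoc, hUV, hVU, h1, h2, mul_one, one_mul] at h'' ⊢
    exact h''
  · rintro ⟨T', hT', rfl⟩ m ⟨s, hs, rfl⟩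
    have h' := congrArg (fun x => U * x * V) (hT' s hs)
    simp only [mul_assoc, hUV, hVU, h1, h2, mul_one, one_mul] at h' ⊢
    exact h'

private lemma conj_inj_aux (h2 : V * U = 1) : Function.Injective (fun T : M => U * T * V) := by
  intro a b hab
  have h' := congrArg (fun x => V * x * U) hab
  have hVU : ∀ x : M, V * (U * x) = x := fun x => by rw [← mul_assoc, h2, one_mul]
  simp only [mul_assoc, hVU, h2, mul_one, one_mul] at h'
  exact h'

end ConjAux

/-- Proposition 2.2 of the paper; stability of the split property.
Let `Γ₀ ⊆ Γ₁ ⊆ Γ₂ ⊆ Γ₃` be regions with local algebras `A₀ ≤ A₁ ≤ A₂ ≤ A₃ ⊆ A`, and let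
`ω` be a pure state on `A` with GNS representation `(π, Hs, Ω)` admitting a Type I factor
`F` with `π(A₁)'' ⊆ F ⊆ π(A₂)''`.  Suppose `α = Ad(u) ∘ α̃ ∘ β̃` where `u ∈ A` is unitary,
`α̃ = α_{Γ₂ᶜ} ⊗ α_{Γ₂∖Γ₁} ⊗ α_{Γ₁}` (so `α̃(A₀) ⊆ A₁` and `α̃⁻¹(A₂) ⊆ A₂`), and
`β̃ = β_{Γ₃∖Γ₀} ⊗ id` fixes `A₀` pointwise and maps `A₃` onto itself.  Then
`F̃ := Ad(π(u))(F)` is a Type I factor with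
`(π∘α)(A₀)'' ⊆ F̃ ⊆ (π∘α)(A₃)''`; i.e. `ω∘α` is split for `Γ₀ ⊆ Γ₃`. -/
theorem split_property_stability
    {Hs : Type*} [NormedAddCommGroup Hs] [InnerProductSpace ℂ Hs] [CompleteSpace Hs]
    (ω : A →ₗ[ℂ] ℂ) (hω : IsPureState ω)
    (π : A →⋆ₐ[ℂ] (Hs →L[ℂ] Hs)) (Ω : Hs)
    (hGNS : ∀ a : A, ω a = @inner ℂ Hs _ Ω (π a Ω))
    (hcyc : Dense ((Submodule.span ℂ (Set.range fun a : A => π a Ω) : Submodule ℂ Hs) : Set Hs))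
    (A₀ A₁ A₂ A₃ : StarSubalgebra ℂ A)
    (h01 : A₀ ≤ A₁) (h12 : A₁ ≤ A₂) (h23 : A₂ ≤ A₃)
    (F : VonNeumannAlgebra Hs)
    (hF₁ : ∀ a ∈ A₁, π a ∈ F)
    (hF₂ : (F : Set (Hs →L[ℂ] Hs)) ⊆
      Set.centralizer (Set.centralizer ((fun a => π a) '' (A₂ : Set A))))
    (hFtypeI : IsTypeIFactorSet (F : Set (Hs →L[ℂ] Hs)))
    (α α' β : A ≃⋆ₐ[ℂ] A)
    (u : A) (hu₁ : u * star u = 1) (hu₂ : star u * u = 1)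
    (hfac : ∀ a : A, α a = u * α' (β a) * star u)
    (hβ₀ : ∀ a ∈ A₀, β a = a)
    (hβ₃ : Set.MapsTo β (A₃ : Set A) (A₃ : Set A))
    (hβ₃' : Set.MapsTo β.symm (A₃ : Set A) (A₃ : Set A))
    (hα'₀ : ∀ a ∈ A₀, α' a ∈ A₁)
    (hα'₂ : ∀ a ∈ A₂, α'.symm a ∈ A₂) :
    ∃ Ftil : VonNeumannAlgebra Hs,
      (Ftil : Set (Hs →L[ℂ] Hs)) =
        (fun T => π u * T * star (π u)) '' (F : Set (Hs →L[ℂ] Hs)) ∧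
      IsTypeIFactorSet (Ftil : Set (Hs →L[ℂ] Hs)) ∧
      Set.centralizer (Set.centralizer ((fun a => π (α a)) '' (A₀ : Set A)))
        ⊆ (Ftil : Set (Hs →L[ℂ] Hs)) ∧
      (Ftil : Set (Hs →L[ℂ] Hs)) ⊆
        Set.centralizer (Set.centralizer ((fun a => π (α a)) '' (A₃ : Set A))) := by
  set U : Hs →L[ℂ] Hs := π u with hU
  have hU1 : U * star U = 1 := by rw [hU, ← map_star, ← map_mul, hu₁, map_one]
  have hU2 : star U * U = 1 := by rw [hU, ← map_star, ← map_mul, hu₂, map_one]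
  set c : (Hs →L[ℂ] Hs) → (Hs →L[ℂ] Hs) := fun T => U * T * star U with hc
  have hcinj : Function.Injective c := conj_inj_aux hU2
  have hccen : ∀ S : Set (Hs →L[ℂ] Hs),
      Set.centralizer (c '' S) = c '' Set.centralizer S := fun S =>
    conj_centralizer_aux hU1 hU2 S
  have hcstar : ∀ T : Hs →L[ℂ] Hs, star (c T) = c (star T) := by
    intro T
    simp only [hc, star_mul, star_star, mul_assoc]
  have hcmul : ∀ T T' : Hs →L[ℂ] Hs, c T * c T' = c (T * T') := by
    intro T T'
    simp only [hc, mul_assoc]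
    rw [← mul_assoc (star U) U, hU2, one_mul]
  have hcsmul : ∀ (z : ℂ), c (z • 1) = z • 1 := by
    intro z
    simp only [hc, mul_smul_comm, smul_mul_assoc, mul_one, one_mul, hU1]
  have hcscal : c '' {T : Hs →L[ℂ] Hs | ∃ z : ℂ, T = z • 1} =
      {T : Hs →L[ℂ] Hs | ∃ z : ℂ, T = z • 1} := by
    ext T
    constructor
    · rintro ⟨T', ⟨z, rfl⟩, rfl⟩
      exact ⟨z, hcsmul z⟩
    · rintro ⟨z, rfl⟩
      exact ⟨z • 1, ⟨z, rfl⟩, hcsmul z⟩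
  have hczero : c 0 = 0 := by simp only [hc, mul_zero, zero_mul]
  -- the conjugated star subalgebra
  let Fsub : StarSubalgebra ℂ (Hs →L[ℂ] Hs) :=
  { carrier := c '' (F : Set (Hs →L[ℂ] Hs))
    mul_mem' := by
      rintro x y ⟨a, ha, rfl⟩ ⟨b, hb, rfl⟩
      exact ⟨a * b, mul_mem (show a ∈ F from ha) (show b ∈ F from hb), (hcmul a b).symm⟩
    one_mem' := ⟨1, one_mem F, by simp only [hc, mul_one, hU1]⟩
    add_mem' := by
      rintro x y ⟨a, ha, rfl⟩ ⟨b, hb, rfl⟩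
      exact ⟨a + b, add_mem (show a ∈ F from ha) (show b ∈ F from hb),
        by simp only [hc, mul_add, add_mul]⟩
    zero_mem' := ⟨0, zero_mem F, hczero⟩
    algebraMap_mem' := by
      intro z
      refine ⟨algebraMap ℂ _ z, F.toStarSubalgebra.algebraMap_mem z, ?_⟩
      rw [Algebra.algebraMap_eq_smul_one]
      exact hcsmul z
    star_mem' := by
      rintro x ⟨a, ha, rfl⟩
      exact ⟨star a, star_mem (show a ∈ F from ha), (hcstar a).symm⟩ }
  let Ftil : VonNeumannAlgebra Hs :=
  { toStarSubalgebra := Fsub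
    centralizer_centralizer' := by
      show Set.centralizer (Set.centralizer (c '' (F : Set (Hs →L[ℂ] Hs)))) = _
      rw [hccen, hccen, F.centralizer_centralizer] }
  have hcar : (Ftil : Set (Hs →L[ℂ] Hs)) = c '' (F : Set (Hs →L[ℂ] Hs)) := rfl
  refine ⟨Ftil, hcar, ?_, ?_, ?_⟩
  · -- Type I
    obtain ⟨hcen, p, hpF, hpsa, hpid, hpne, hpmin⟩ := hFtypeI
    constructor
    · rw [hcar, hccen, ← Set.image_inter hcinj, hcen, hcscal]
    · refine ⟨c p, by rw [hcar]; exact ⟨p, hpF, rfl⟩, ?_, ?_, ?_, ?_⟩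
      · rw [IsSelfAdjoint, hcstar, hpsa.star_eq]
      · rw [IsIdempotentElem, hcmul, hpid.eq]
      · intro h
        exact hpne (hcinj (h.trans hczero.symm))
      · intro q hq hqsa hqid hqp
        rw [hcar] at hq
        obtain ⟨q', hq', rfl⟩ := hq
        have hq'sa : IsSelfAdjoint q' := hcinj ((hcstar q').symm.trans hqsa.star_eq)
        have hq'id : IsIdempotentElem q' := hcinj ((hcmul q' q').symm.trans hqid.eq)
        have hq'p : q' * p = q' := hcinj ((hcmul q' p).symm.trans hqp)
        rcases hpmin q' hq' hq'sa hq'id hq'p with h | h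
        · exact Or.inl (by rw [h, hczero])
        · exact Or.inr (by rw [h])
  · -- lower inclusion
    rw [hcar]
    have hsub : (fun a => π (α a)) '' (A₀ : Set A) ⊆ c '' (F : Set (Hs →L[ℂ] Hs)) := by
      rintro x ⟨a, ha, rfl⟩
      refine ⟨π (α' a), hF₁ _ (hα'₀ a ha), ?_⟩
      show c (π (α' a)) = π (α a)
      rw [hfac a, hβ₀ a ha]
      simp only [hc, hU, map_mul, map_star]
    have h2 := Set.centralizer_subset (Set.centralizer_subset hsub)
    rwa [hccen, hccen, F.centralizer_centralizer] at h2
  · -- upper inclusion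
    rw [hcar]
    have himg : (fun a => π (α a)) '' (A₃ : Set A) =
        c '' ((fun a => π (α' a)) '' (A₃ : Set A)) := by
      ext x
      constructor
      · rintro ⟨a, ha, rfl⟩
        refine ⟨π (α' (β a)), ⟨β a, hβ₃ ha, rfl⟩, ?_⟩
        show c (π (α' (β a))) = π (α a)
        rw [hfac a]
        simp only [hc, hU, map_mul, map_star]
      · rintro ⟨y, ⟨b, hb, rfl⟩, rfl⟩
        refine ⟨β.symm b, hβ₃' hb, ?_⟩
        show π (α (β.symm b)) = c (π (α' b))
        rw [hfac (β.symm b), β.apply_symm_apply]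
        simp only [hc, hU, map_mul, map_star]
    have hsub2 : (fun a => π a) '' (A₂ : Set A) ⊆ (fun a => π (α' a)) '' (A₃ : Set A) := by
      rintro x ⟨a, ha, rfl⟩
      exact ⟨α'.symm a, h23 (hα'₂ a ha), by
        show π (α' (α'.symm a)) = π a
        rw [α'.apply_symm_apply]⟩
    have hmono := Set.centralizer_subset (Set.centralizer_subset hsub2)
    rw [himg, hccen, hccen]
    rintro x ⟨T, hT, rfl⟩
    exact ⟨T, hmono (hF₂ hT), rfl⟩
end
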